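/- Let u > −1 and v be real numbers with 1 − 4(1+u)v(1−v) > 0 and set Ω := √(1 − 4(1+u)v(1−v)). Then Φ(0,u,v) = 1, and for every z ∈ [0,1) at which the denominator of Φ is nonzero, the function z ↦ Φ(z,u,v) is differentiable at z with derivative v(1+u)·Φ(z,u,v)² + (1−v)/(1−z)². In other words, the explicit function Φ solves the Riccati differential equation ∂Φ/∂z = v(1+u)Φ² + (1−v)/(1−z)² with initial value Φ(0,u,v) = 1. -/

import Mathlib

/-- `Ω = √(1 − 4(1+u)v(1−v))`. -/
noncomputable def OmegaR (u v : ℝ) : ℝ := Real.sqrt (1 - 4 * (1 + u) * v * (1 - v))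

/-- The denominator of `Φ(z,u,v)`:
`(Ω + 1 − 2v(1+u) + (1−z)^Ω·(Ω − 1 + 2v(1+u)))·(1−z)`, with `(1−z)^Ω = exp(Ω·log(1−z))`. -/
noncomputable def denPhi (z u v : ℝ) : ℝ :=
  (OmegaR u v + 1 - 2 * v * (1 + u)
    + Real.exp (OmegaR u v * Real.log (1 - z)) * (OmegaR u v - 1 + 2 * v * (1 + u)))
    * (1 - z)

/-- The explicit solution (4):
`Φ(z,u,v) = (Ω + 1 − 2v + (1−z)^Ω·(Ω − 1 + 2v)) / ((Ω + 1 − 2v(1+u) + (1−z)^Ω·(Ω − 1 + 2v(1+u)))·(1−z))`. -/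
noncomputable def PhiR (z u v : ℝ) : ℝ :=
  (OmegaR u v + 1 - 2 * v
    + Real.exp (OmegaR u v * Real.log (1 - z)) * (OmegaR u v - 1 + 2 * v))
    / denPhi z u v

/-!
Write `e = (1-z)^Ω`, `N = Ω + 1 - 2v + e(Ω - 1 + 2v)` and
`C = Ω + 1 - 2v(1+u) + e(Ω - 1 + 2v(1+u))`, so that `Φ = N / (C(1-z))`.
Since `e' = -Ω e / (1-z)`, the quotient rule gives
`Φ' = (N C - Ω e ((Ω - 1 + 2v) C - (Ω - 1 + 2v(1+u)) N)) / (C(1-z))²`, and the Riccati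
equation reduces to a polynomial identity in `Ω, u, v, e`, which holds modulo `Ω² = 1 - 4(1+u)v(1-v)`.
-/

open Real

theorem hasDerivAt_exp_mul_log_one_sub (Ω : ℝ) {z : ℝ} (hz : z < 1) :
    HasDerivAt (fun w => exp (Ω * log (1 - w)))
      (-(Ω * exp (Ω * log (1 - z))) / (1 - z)) z := by
  have hsub : HasDerivAt (fun w : ℝ => 1 - w) (-1) z := by
    simpa using (hasDerivAt_id z).const_sub 1
  convert ((hsub.log (sub_ne_zero.mpr hz.ne')).const_mul Ω).exp using 1
  ring

theorem hasDerivAt_div_exp_mul_log_one_sub (Ω a b c d : ℝ) {z : ℝ} (hz : z < 1)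
    (hC : c + exp (Ω * log (1 - z)) * d ≠ 0) :
    HasDerivAt
      (fun w => (a + exp (Ω * log (1 - w)) * b) / ((c + exp (Ω * log (1 - w)) * d) * (1 - w)))
      (((a + exp (Ω * log (1 - z)) * b) * (c + exp (Ω * log (1 - z)) * d)
          - Ω * exp (Ω * log (1 - z)) * (b * (c + exp (Ω * log (1 - z)) * d)
            - d * (a + exp (Ω * log (1 - z)) * b)))
        / ((c + exp (Ω * log (1 - z)) * d) * (1 - z)) ^ 2) z := by
  have hE := hasDerivAt_exp_mul_log_one_sub Ω hz
  have hsub : HasDerivAt (fun w : ℝ => 1 - w) (-1) z := by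
    simpa using (hasDerivAt_id z).const_sub 1
  have hD : HasDerivAt (fun w => (c + exp (Ω * log (1 - w)) * d) * (1 - w)) _ z :=
    ((hE.mul_const d).const_add c).mul hsub
  have hw : 1 - z ≠ 0 := sub_ne_zero.mpr hz.ne'
  refine (((hE.mul_const b).const_add a).div hD (mul_ne_zero hC hw)).congr_deriv ?_
  field_simp
  ring

theorem riccati_numerator_identity {Ω u v e : ℝ} (hΩ : Ω ^ 2 = 1 - 4 * (1 + u) * v * (1 - v)) :
    (Ω + 1 - 2 * v + e * (Ω - 1 + 2 * v))
        * (Ω + 1 - 2 * v * (1 + u) + e * (Ω - 1 + 2 * v * (1 + u)))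
      - Ω * e * ((Ω - 1 + 2 * v) * (Ω + 1 - 2 * v * (1 + u) + e * (Ω - 1 + 2 * v * (1 + u)))
        - (Ω - 1 + 2 * v * (1 + u)) * (Ω + 1 - 2 * v + e * (Ω - 1 + 2 * v)))
    = v * (1 + u) * (Ω + 1 - 2 * v + e * (Ω - 1 + 2 * v)) ^ 2
      + (1 - v) * (Ω + 1 - 2 * v * (1 + u) + e * (Ω - 1 + 2 * v * (1 + u))) ^ 2 := by
  linear_combination (v - v * (1 + u)) * (1 - e) ^ 2 * hΩ

theorem Phi_solves_riccati_general (u v : ℝ)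
    (hdisc : 0 < 1 - 4 * (1 + u) * v * (1 - v)) :
    PhiR 0 u v = 1 ∧
    ∀ z ∈ Set.Ico (0 : ℝ) 1, denPhi z u v ≠ 0 →
      HasDerivAt (fun w => PhiR w u v)
        (v * (1 + u) * (PhiR z u v) ^ 2 + (1 - v) / (1 - z) ^ 2) z := by
  have hΩ : OmegaR u v ^ 2 = 1 - 4 * (1 + u) * v * (1 - v) := sq_sqrt hdisc.le
  constructor
  · have hΩ0 : OmegaR u v ≠ 0 := (sqrt_pos.mpr hdisc).ne'
    simp only [PhiR, denPhi, sub_zero, log_one, mul_zero, exp_zero, one_mul, mul_one]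
    ring_nf
    field_simp
  · rintro z ⟨-, hz⟩ hden
    have hC := left_ne_zero_of_mul hden
    have hw : 1 - z ≠ 0 := sub_ne_zero.mpr hz.ne'
    refine (hasDerivAt_div_exp_mul_log_one_sub _ _ _ _ _ hz hC).congr_deriv ?_
    rw [riccati_numerator_identity hΩ]
    simp only [PhiR, denPhi]
    generalize OmegaR u v + 1 - 2 * v + _ = N
    generalize OmegaR u v + 1 - 2 * v * (1 + u) + _ = C at hC ⊢
    field_simp

/-- The explicit function `Φ` solves the Riccati differential equation (3):
`Φ(0,u,v) = 1` and `∂Φ/∂z = v(1+u)Φ² + (1−v)/(1−z)²` at every `z ∈ [0,1)` where the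
denominator of `Φ` is nonzero. -/
theorem Phi_solves_riccati (u v : ℝ) (hu : -1 < u)
    (hdisc : 0 < 1 - 4 * (1 + u) * v * (1 - v)) :
    PhiR 0 u v = 1 ∧
    ∀ z ∈ Set.Ico (0 : ℝ) 1, denPhi z u v ≠ 0 →
      HasDerivAt (fun w => PhiR w u v)
        (v * (1 + u) * (PhiR z u v) ^ 2 + (1 - v) / (1 - z) ^ 2) z :=
  Phi_solves_riccati_general u v hdisc
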